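/- arXiv:2308.01041 — 2 statements merged into one kernel-verified Lean document; each statement's English description precedes it below -/
import Mathlib

section
/- Let d ≥ 2 and let γ < 0 satisfy |γ| < min(2/d, 4/(3+d)). Then there exists a real number b < 0 such that 1 - √(1 - γ²(d-1)) < γb < 1 + √(1 - γ²(d-1)) and |γ| < γb ≤ min(1 + |γ|, 2|γ|). -/
theorem stmt_5 (d : ℕ) (hd : 2 ≤ d) (γ : ℝ) (hγ : γ < 0)
    (h : |γ| < min (2 / (d : ℝ)) (4 / (3 + (d : ℝ)))) :
    ∃ b : ℝ, b < 0 ∧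
      1 - Real.sqrt (1 - γ ^ 2 * ((d : ℝ) - 1)) < γ * b ∧
      γ * b < 1 + Real.sqrt (1 - γ ^ 2 * ((d : ℝ) - 1)) ∧
      |γ| < γ * b ∧ γ * b ≤ min (1 + |γ|) (2 * |γ|) := by
  set s : ℝ := -γ with hs
  have hsabs : |γ| = s := abs_of_neg hγ
  have hspos : 0 < s := by linarith
  have hdpos : (0:ℝ) < (3 + (d:ℝ)) := by positivity
  have h2 : s < 4 / (3 + (d:ℝ)) := hsabs ▸ lt_of_lt_of_le h (min_le_right _ _)
  have h3 : s * (3 + (d:ℝ)) < 4 := (lt_div_iff₀ hdpos).mp h2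
  have hd1 : (1:ℝ) ≤ (d:ℝ) := by exact_mod_cast Nat.one_le_of_lt hd
  have key : |2 * s - 1| < Real.sqrt (1 - γ ^ 2 * ((d : ℝ) - 1)) := by
    rw [show γ ^ 2 = s ^ 2 by ring]
    apply (Real.lt_sqrt (abs_nonneg _)).mpr
    rw [sq_abs]
    nlinarith [sq_nonneg s, mul_pos hspos hspos]
  have habs := abs_lt.mp key
  refine ⟨-2, by norm_num, by nlinarith [habs.1], by nlinarith [habs.2], ?_, ?_⟩
  · rw [hsabs]; nlinarith
  · rw [hsabs]
    have hs1 : s ≤ 1 := by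
      have hm := lt_of_lt_of_le h (min_le_left _ _)
      rw [hsabs] at hm
      have : (2:ℝ) ≤ (d:ℝ) := by exact_mod_cast hd
      have : 2 / (d:ℝ) ≤ 1 := by
        rw [div_le_one (by linarith)]; linarith
      linarith
    exact le_min (by nlinarith) (by nlinarith)
end

section
/- Let a > -1 and C > 0, and let u : (0,∞) → ℝ be locally Lipschitz and nonnegative with u'(t) ≤ -C·u(t)²·t^a for almost every t > 0. Then there is a constant C' > 0 (depending only on a, C) such that u(t) ≤ C'·t^{-1-a} for all t > 0. -/
open MeasureTheory Set Filter intervalIntegral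
open scoped NNReal Topology

lemma glue2 {f : ℝ → ℝ} {K₁ K₂ : ℝ≥0} {a b c : ℝ} (hab : a ≤ b) (hbc : b ≤ c)
    (h₁ : LipschitzOnWith K₁ f (Icc a b)) (h₂ : LipschitzOnWith K₂ f (Icc b c)) :
    LipschitzOnWith (max K₁ K₂) f (Icc a c) := by
  rw [lipschitzOnWith_iff_dist_le_mul] at *
  have key : ∀ x ∈ Icc a c, ∀ y ∈ Icc a c, x ≤ y → dist (f x) (f y) ≤ (max K₁ K₂ : ℝ≥0) * dist x y := by
    intro x hx y hy hxy
    rcases le_total y b with h | h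
    · exact le_trans (h₁ x ⟨hx.1, le_trans hxy h⟩ y ⟨hy.1, h⟩)
        (by gcongr; exact_mod_cast le_max_left _ _)
    rcases le_total b x with h' | h'
    · exact le_trans (h₂ x ⟨h', hx.2⟩ y ⟨le_trans h' hxy, hy.2⟩)
        (by gcongr; exact_mod_cast le_max_right _ _)
    · calc dist (f x) (f y) ≤ dist (f x) (f b) + dist (f b) (f y) := dist_triangle _ _ _
        _ ≤ (K₁ : ℝ) * dist x b + (K₂ : ℝ) * dist b y :=
            add_le_add (h₁ x ⟨hx.1, h'⟩ b ⟨hab, le_refl b⟩) (h₂ b ⟨le_refl b, hbc⟩ y ⟨h, hy.2⟩)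
        _ ≤ (max K₁ K₂ : ℝ≥0) * dist x b + (max K₁ K₂ : ℝ≥0) * dist b y := by
            gcongr
            · exact_mod_cast le_max_left K₁ K₂
            · exact_mod_cast le_max_right K₁ K₂
        _ = (max K₁ K₂ : ℝ≥0) * (dist x b + dist b y) := by ring
        _ = (max K₁ K₂ : ℝ≥0) * dist x y := by
            rw [Real.dist_eq, Real.dist_eq, Real.dist_eq,
              abs_of_nonpos (by linarith), abs_of_nonpos (by linarith),
              abs_of_nonpos (by linarith)]
            ring
  intro x hx y hy
  rcases le_total x y with h | h
  · exact key x hx y hy h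
  · rw [dist_comm, dist_comm x y]; exact key y hy x hx h

lemma exists_lip_Icc {f : ℝ → ℝ} (h : LocallyLipschitzOn (Ioi (0:ℝ)) f) {s t : ℝ}
    (hs : 0 < s) (hst : s ≤ t) : ∃ K : ℝ≥0, LipschitzOnWith K f (Icc s t) := by
  set S : Set ℝ := {x | x ∈ Icc s t ∧ ∃ K : ℝ≥0, LipschitzOnWith K f (Icc s x)} with hS
  have hsS : s ∈ S := ⟨⟨le_refl s, hst⟩, 0, by
    rw [Icc_self, lipschitzOnWith_iff_dist_le_mul]
    rintro x rfl y rfl; simp⟩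
  have hbdd : BddAbove S := ⟨t, fun x hx => hx.1.2⟩
  have hne : S.Nonempty := ⟨s, hsS⟩
  set c := sSup S with hc
  have hsc : s ≤ c := le_csSup hbdd hsS
  have hct : c ≤ t := csSup_le hne fun x hx => hx.1.2
  have hc0 : (0:ℝ) < c := lt_of_lt_of_le hs hsc
  obtain ⟨K₀, t₀, ht₀, hlipt₀⟩ := h (Set.mem_Ioi.mpr hc0)
  have ht₀' : t₀ ∈ nhds c := by
    rw [nhdsWithin_eq_nhds.mpr (isOpen_Ioi.mem_nhds hc0)] at ht₀; exact ht₀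
  obtain ⟨ε, hε, hball⟩ := Metric.mem_nhds_iff.mp ht₀'
  have hb2 : Ioo (c - ε) (c + ε) ⊆ t₀ := by rw [← Real.ball_eq_Ioo]; exact hball
  obtain ⟨x, hxS, hxlt⟩ := exists_lt_of_lt_csSup hne (by linarith : c - ε/2 < c)
  have hxc : x ≤ c := le_csSup hbdd hxS
  obtain ⟨⟨hsx, hxt⟩, K₁, hK₁⟩ := hxS
  set y := min t (c + ε/2) with hy
  have hxy : x ≤ y := le_min hxt (by linarith)
  have hyS : y ∈ S := by
    refine ⟨⟨le_trans hsx hxy, min_le_left _ _⟩, max K₁ K₀, glue2 hsx hxy hK₁ ?_⟩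
    exact (hlipt₀.mono (fun z hz => hb2 ⟨by
      rcases hz with ⟨h1, h2⟩; linarith, by
      rcases hz with ⟨h1, h2⟩; exact lt_of_le_of_lt h2 (lt_of_le_of_lt (min_le_right _ _) (by linarith))⟩))
  have hyc : y ≤ c := le_csSup hbdd hyS
  have hct' : c = t := by
    by_contra hne'
    have hctlt : c < t := lt_of_le_of_ne hct hne'
    have : c < y := lt_min hctlt (by linarith)
    linarith
  have hyt : y = t := by rw [hy, hct']; exact min_eq_left (by linarith)
  rw [← hyt]
  exact hyS.2


lemma lipschitz_ftc {K : ℝ≥0} {f : ℝ → ℝ} (hf : LipschitzWith K f) {a b : ℝ} (hab : a ≤ b) :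
    f b - f a = ∫ x in a..b, deriv f x := by
  have hcont : Continuous f := hf.continuous
  set h : ℕ → ℝ := fun n => 1 / (n + 1) with hh
  have hhpos : ∀ n, 0 < h n := fun n => by positivity
  have hh0 : Tendsto h atTop (𝓝 0) := tendsto_one_div_add_atTop_nhds_zero_nat
  set F : ℕ → ℝ → ℝ := fun n x => (f (x + h n) - f x) / h n with hF
  -- Step A: value of ∫ F n
  have stepA : ∀ n, ∫ x in a..b, F n x =
      ((∫ x in b..(b + h n), f x) - ∫ x in a..(a + h n), f x) / h n := by
    intro n
    have hint : ∀ c d : ℝ, IntervalIntegrable f volume c d := fun c d =>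
      hcont.intervalIntegrable c d
    have h1 : (∫ x in a..b, f (x + h n)) = ∫ x in (a + h n)..(b + h n), f x :=
      integral_comp_add_right f (h n)
    have hc2 : Continuous (fun x => f (x + h n)) := by fun_prop
    have h2 : (∫ x in a..b, F n x) = ((∫ x in a..b, f (x + h n)) - ∫ x in a..b, f x) / h n := by
      rw [← integral_sub (hc2.intervalIntegrable a b) (hint a b), ← intervalIntegral.integral_div]
    rw [h2, h1]
    congr 1
    have c1 : (∫ x in a..(a + h n), f x) + ∫ x in (a + h n)..(b + h n), f x
        = ∫ x in a..(b + h n), f x := integral_add_adjacent_intervals (hint _ _) (hint _ _)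
    have c2 : (∫ x in a..b, f x) + ∫ x in b..(b + h n), f x = ∫ x in a..(b + h n), f x :=
      integral_add_adjacent_intervals (hint _ _) (hint _ _)
    linarith
  -- Step B: convergence of the averaged integrals
  have stepB : ∀ c : ℝ, Tendsto (fun n => (∫ x in c..(c + h n), f x) / h n) atTop (𝓝 (f c)) := by
    intro c
    have hG : HasDerivAt (fun y => ∫ x in c..y, f x) (f c) c :=
      (hcont.integral_hasStrictDerivAt c c).hasDerivAt
    have hslope := hasDerivAt_iff_tendsto_slope.mp hG
    have hseq : Tendsto (fun n => c + h n) atTop (𝓝[≠] c) := by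
      apply tendsto_nhdsWithin_of_tendsto_nhds_of_eventually_within
      · simpa using (tendsto_const_nhds.add hh0)
      · exact Eventually.of_forall fun n => by
          simp only [mem_compl_iff, mem_singleton_iff]
          have := hhpos n; intro hcontra
          have : h n = 0 := by linarith [congrArg (· - c) hcontra]
          linarith
    have hcomp := hslope.comp hseq
    have heq : (slope (fun y => ∫ x in c..y, f x) c ∘ fun n => c + h n)
        = fun n => (∫ x in c..(c + h n), f x) / h n := by
      funext n
      simp only [Function.comp_apply, slope_def_field, intervalIntegral.integral_same,
        add_sub_cancel_left, sub_zero]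
    rwa [heq] at hcomp
  -- Step C: dominated convergence
  have hmeasF : ∀ n, AEStronglyMeasurable (F n) (volume.restrict (Ioc a b)) := by
    intro n
    have : Continuous (F n) := by
      simp only [hF]; fun_prop
    exact this.aestronglyMeasurable
  have hbound_int : Integrable (fun _ : ℝ => (K : ℝ)) (volume.restrict (Ioc a b)) := by
    rw [← IntegrableOn]
    exact (integrableOn_const_iff).mpr (Or.inr measure_Ioc_lt_top)
  have h_bound : ∀ n, ∀ᵐ x ∂(volume.restrict (Ioc a b)), ‖F n x‖ ≤ (K : ℝ) := by
    intro n
    refine Eventually.of_forall fun x => ?_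
    have hd : dist (f (x + h n)) (f x) ≤ K * dist (x + h n) x := hf.dist_le_mul _ _
    rw [Real.dist_eq, Real.dist_eq, add_sub_cancel_left, abs_of_pos (hhpos n)] at hd
    have : ‖F n x‖ = |f (x + h n) - f x| / h n := by
      rw [hF]; simp [abs_div, abs_of_pos (hhpos n)]
    rw [this, div_le_iff₀ (hhpos n)]
    exact hd
  have hseq : ∀ c : ℝ, Tendsto (fun n => c + h n) atTop (𝓝[≠] c) := by
    intro c
    apply tendsto_nhdsWithin_of_tendsto_nhds_of_eventually_within
    · simpa using (tendsto_const_nhds.add hh0)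
    · refine Eventually.of_forall fun n => ?_
      simp only [mem_compl_iff, mem_singleton_iff]
      have := hhpos n; intro hcontra
      have : h n = 0 := by linarith [congrArg (· - c) hcontra]
      linarith
  have h_lim : ∀ᵐ x ∂(volume.restrict (Ioc a b)),
      Tendsto (fun n => F n x) atTop (𝓝 (deriv f x)) := by
    refine ae_restrict_of_ae ?_
    filter_upwards [hf.ae_differentiableAt_real] with x hx
    have hslope := hasDerivAt_iff_tendsto_slope.mp hx.hasDerivAt
    have hcomp := hslope.comp (hseq x)
    have heq : (slope f x ∘ fun n => x + h n) = fun n => F n x := by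
      funext n
      simp only [Function.comp_apply, slope_def_field, add_sub_cancel_left, hF]
    rwa [heq] at hcomp
  have htends : Tendsto (fun n => ∫ x in Ioc a b, F n x) atTop
      (𝓝 (∫ x in Ioc a b, deriv f x)) :=
    tendsto_integral_of_dominated_convergence _ hmeasF hbound_int h_bound h_lim
  have htends2 : Tendsto (fun n => ∫ x in a..b, F n x) atTop (𝓝 (f b - f a)) := by
    have heq : (fun n => ∫ x in a..b, F n x)
        = fun n => (∫ x in b..(b + h n), f x) / h n - (∫ x in a..(a + h n), f x) / h n := by
      funext n; rw [stepA n, sub_div]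
    rw [heq]
    exact (stepB b).sub (stepB a)
  have htends1 : Tendsto (fun n => ∫ x in a..b, F n x) atTop (𝓝 (∫ x in a..b, deriv f x)) := by
    have : ∀ n, (∫ x in a..b, F n x) = ∫ x in Ioc a b, F n x := fun n =>
      intervalIntegral.integral_of_le hab
    simp only [this, intervalIntegral.integral_of_le hab]
    exact htends
  exact (tendsto_nhds_unique htends2 htends1)

theorem stmt_12 (a C : ℝ) (ha : -1 < a) (hC : 0 < C) (u : ℝ → ℝ)
    (hlip : LocallyLipschitzOn (Set.Ioi (0 : ℝ)) u)
    (hpos : ∀ t, 0 < t → 0 ≤ u t)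
    (hode : ∀ᵐ t ∂(volume.restrict (Set.Ioi (0 : ℝ))),
      deriv u t ≤ -C * u t ^ 2 * t ^ a) :
    ∃ C' : ℝ, 0 < C' ∧ ∀ t, 0 < t → u t ≤ C' * t ^ (-1 - a) := by
  have h1 : ∀ᵐ x ∂(volume : Measure ℝ), x ∈ Ioi (0:ℝ) → deriv u x ≤ -C * u x ^ 2 * x ^ a :=
    (ae_restrict_iff' measurableSet_Ioi).mp hode
  -- monotonicity
  have hmono : ∀ s t : ℝ, 0 < s → s ≤ t → u t ≤ u s := by
    intro s t hs hst
    obtain ⟨K, hK⟩ := exists_lip_Icc hlip hs hst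
    obtain ⟨g, hg, hgu⟩ := hK.extend_real
    have hgs : g s = u s := (hgu ⟨le_refl s, hst⟩).symm
    have hgt : g t = u t := (hgu ⟨hst, le_refl t⟩).symm
    have hftc := lipschitz_ftc hg hst
    have hae : ∀ᵐ x ∂(volume.restrict (Ioo s t)), deriv g x ≤ 0 := by
      rw [ae_restrict_iff' measurableSet_Ioo]
      filter_upwards [h1] with x hx1 hmem
      obtain ⟨hxs, hxt⟩ := hmem
      have hx0 : 0 < x := lt_trans hs hxs
      have hde : deriv g x = deriv u x := by
        apply Filter.EventuallyEq.deriv_eq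
        filter_upwards [isOpen_Ioo.mem_nhds (⟨hxs, hxt⟩ : x ∈ Ioo s t)] with y hy
        exact (hgu (Ioo_subset_Icc_self hy)).symm
      have hb := hx1 (Set.mem_Ioi.mpr hx0)
      have h3 : 0 ≤ C * u x ^ 2 * x ^ a :=
        mul_nonneg (mul_nonneg hC.le (sq_nonneg _)) (Real.rpow_nonneg hx0.le a)
      rw [hde]; nlinarith
    have hint : (∫ x in s..t, deriv g x) ≤ 0 := by
      rw [intervalIntegral.integral_of_le hst, MeasureTheory.integral_Ioc_eq_integral_Ioo]
      exact integral_nonpos_of_ae hae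
    rw [hgs, hgt] at hftc
    linarith
  -- constants
  have h2pow : 1 < (2:ℝ) ^ (a+1) :=
    (Real.one_lt_rpow_iff_of_pos (by norm_num)).mpr (Or.inl ⟨by norm_num, by linarith⟩)
  set δ : ℝ := 1 - ((2:ℝ) ^ (a+1))⁻¹ with hδdef
  have hδ : 0 < δ := by
    have : ((2:ℝ) ^ (a+1))⁻¹ < 1 := inv_lt_one_of_one_lt₀ h2pow
    simp only [hδdef]; linarith
  set C' : ℝ := (a+1) / (C * δ) with hC'def
  have hC' : 0 < C' := div_pos (by linarith) (mul_pos hC hδ)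
  refine ⟨C', hC', ?_⟩
  intro t ht
  rcases (hpos t ht).eq_or_lt with hu0 | hut
  · rw [← hu0]
    positivity
  set s : ℝ := t/2 with hsdef
  have hs : 0 < s := by positivity
  have hst : s ≤ t := by simp only [hsdef]; linarith
  have hlow : ∀ x ∈ Icc s t, u t ≤ u x := fun x hx => hmono x t (lt_of_lt_of_le hs hx.1) hx.2
  have hlowpos : ∀ x ∈ Icc s t, 0 < u x := fun x hx => lt_of_lt_of_le hut (hlow x hx)
  obtain ⟨K, hK⟩ := exists_lip_Icc hlip hs hst
  -- w = 1/u is Lipschitz on [s,t]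
  set w : ℝ → ℝ := fun x => (u x)⁻¹ with hwdef
  set M : ℝ≥0 := K / (u t).toNNReal ^ 2 with hMdef
  have hMcoe : (M : ℝ) = (K : ℝ) / (u t) ^ 2 := by
    simp only [hMdef, NNReal.coe_div, NNReal.coe_pow, Real.coe_toNNReal _ (hpos t ht)]
  have hwlip : LipschitzOnWith M w (Icc s t) := by
    rw [lipschitzOnWith_iff_dist_le_mul]
    intro p hp q hq
    have hup : 0 < u p := hlowpos p hp
    have huq : 0 < u q := hlowpos q hq
    have hutp : u t ≤ u p := hlow p hp
    have hutq : u t ≤ u q := hlow q hq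
    have key : w p - w q = (u q - u p) / (u p * u q) := by
      simp only [hwdef]; field_simp
    rw [Real.dist_eq, key, abs_div, abs_of_pos (mul_pos hup huq)]
    have hd : |u p - u q| ≤ (K : ℝ) * |p - q| := by
      have := hK.dist_le_mul p hp q hq
      rwa [Real.dist_eq, Real.dist_eq] at this
    have habs : |u q - u p| ≤ (K : ℝ) * |p - q| := by rwa [abs_sub_comm]
    calc |u q - u p| / (u p * u q) ≤ ((K:ℝ) * |p - q|) / (u t ^ 2) :=
          div_le_div₀ (by positivity) habs (by positivity) (by nlinarith)
      _ = (M : ℝ) * dist p q := by rw [hMcoe, Real.dist_eq]; ring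
  obtain ⟨g, hg, hgw⟩ := hwlip.extend_real
  have hgs : g s = (u s)⁻¹ := (hgw ⟨le_refl s, hst⟩).symm
  have hgt : g t = (u t)⁻¹ := (hgw ⟨hst, le_refl t⟩).symm
  have hftc := lipschitz_ftc hg hst
  -- a.e. lower bound on deriv g
  have hae : ∀ᵐ x ∂(volume.restrict (Ioo s t)), C * x ^ a ≤ deriv g x := by
    rw [ae_restrict_iff' measurableSet_Ioo]
    filter_upwards [h1, hg.ae_differentiableAt_real] with x hx1 hx2 hmem
    obtain ⟨hxs, hxt⟩ := hmem
    have hx0 : 0 < x := lt_trans hs hxs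
    have hux : 0 < u x := hlowpos x ⟨le_of_lt hxs, le_of_lt hxt⟩
    have hgx : g x = (u x)⁻¹ := (hgw ⟨le_of_lt hxs, le_of_lt hxt⟩).symm
    have hgx0 : g x ≠ 0 := by rw [hgx]; positivity
    have hfe : (fun y => (g y)⁻¹) =ᶠ[𝓝 x] u := by
      filter_upwards [isOpen_Ioo.mem_nhds (⟨hxs, hxt⟩ : x ∈ Ioo s t)] with y hy
      have hgy : g y = (u y)⁻¹ := (hgw (Ioo_subset_Icc_self hy)).symm
      rw [hgy, inv_inv]
    have hdu : HasDerivAt u (-(deriv g x) / (g x)^2) x := by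
      have hinv : HasDerivAt (fun y => (g y)⁻¹) (-(deriv g x) / (g x)^2) x :=
        hx2.hasDerivAt.inv hgx0
      exact hinv.congr_of_eventuallyEq hfe.symm
    have hderiv_u : deriv u x = -(deriv g x) / (g x)^2 := hdu.deriv
    have hmain := hx1 (Set.mem_Ioi.mpr hx0)
    rw [hderiv_u, hgx] at hmain
    have hinv2 : ((u x)⁻¹)^2 = ((u x)^2)⁻¹ := by rw [inv_pow]
    rw [hinv2, div_eq_mul_inv, inv_inv] at hmain
    nlinarith [pow_pos hux 2]
  -- integrability
  have hiK : IntegrableOn (deriv g) (Ioo s t) volume := by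
    apply Integrable.mono' (g := fun _ => (M:ℝ))
    · exact (integrableOn_const_iff).mpr (Or.inr measure_Ioo_lt_top)
    · exact (measurable_deriv g).aestronglyMeasurable
    · exact Eventually.of_forall fun x => norm_deriv_le_of_lipschitz hg
  have hiC : IntegrableOn (fun x => C * x ^ a) (Ioo s t) volume := by
    have hco : ContinuousOn (fun x : ℝ => C * x ^ a) (Icc s t) := by
      intro x hx
      have hx0 : x ≠ 0 := (lt_of_lt_of_le hs hx.1).ne'
      exact (continuousAt_const.mul (Real.continuousAt_rpow_const x a (Or.inl hx0))).continuousWithinAt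
    exact (hco.integrableOn_compact isCompact_Icc).mono_set Ioo_subset_Icc_self
  have hle : (∫ x in Ioo s t, C * x ^ a) ≤ ∫ x in Ioo s t, deriv g x :=
    integral_mono_ae hiC hiK hae
  -- compute the power integral
  have hcalc : (∫ x in Ioo s t, C * x ^ a) = C * ((t ^ (a+1) - s ^ (a+1)) / (a+1)) := by
    rw [← MeasureTheory.integral_Ioc_eq_integral_Ioo, ← intervalIntegral.integral_of_le hst,
      intervalIntegral.integral_const_mul, integral_rpow (Or.inl ha)]
  have hspow : s ^ (a+1) = t ^ (a+1) * ((2:ℝ) ^ (a+1))⁻¹ := by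
    rw [hsdef, Real.div_rpow ht.le (by norm_num : (0:ℝ) ≤ 2), div_eq_mul_inv]
  have htpow : 0 < t ^ (a+1) := Real.rpow_pos_of_pos ht _
  have hkey : t ^ (a+1) / C' ≤ (u t)⁻¹ := by
    have h4 : (∫ x in Ioo s t, deriv g x) = g t - g s := by
      rw [hftc, intervalIntegral.integral_of_le hst, MeasureTheory.integral_Ioc_eq_integral_Ioo]
    have h5 : 0 ≤ g s := by
      have hus : 0 < u s := hlowpos s ⟨le_refl s, hst⟩
      rw [hgs]; positivity
    have h6 : C * ((t ^ (a+1) - s ^ (a+1)) / (a+1)) ≤ g t := by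
      rw [← hcalc]
      calc (∫ x in Ioo s t, C * x ^ a) ≤ ∫ x in Ioo s t, deriv g x := hle
        _ = g t - g s := h4
        _ ≤ g t := by linarith
    rw [hgt] at h6
    have h7 : t ^ (a+1) - s ^ (a+1) = t ^ (a+1) * δ := by rw [hspow, hδdef]; ring
    have h8 : t ^ (a+1) / C' = C * (t ^ (a+1) * δ / (a+1)) := by
      have hane : a + 1 ≠ 0 := by linarith
      rw [hC'def]; field_simp
    rw [h8]
    calc C * (t ^ (a+1) * δ / (a+1)) = C * ((t ^ (a+1) - s ^ (a+1)) / (a+1)) := by rw [h7]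
      _ ≤ (u t)⁻¹ := h6
  have hpos' : 0 < t ^ (a+1) / C' := div_pos htpow hC'
  have hfinal : u t ≤ C' / t ^ (a+1) := by
    have := inv_anti₀ hpos' hkey
    rwa [inv_inv, inv_div] at this
  rw [show (-1 - a : ℝ) = -(a+1) by ring, Real.rpow_neg ht.le, ← div_eq_mul_inv]
  exact hfinal
end
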